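/- arXiv:1901.09809 — 2 statements merged into one kernel-verified Lean document; each statement's English description precedes it below -/
import Mathlib

section
/- Let z : [-D, 0] × [0, ∞) → ℝ be a C¹ solution of the transport equation z_t(x,t) = -z_x(x,t) with boundary condition z(-D, t) = 0 for all t ≥ 0, where D > 0. Define V₁(t) = ∫_{-D}^{0} e^{-mx} z_x(x,t)² dx for m > 0. Then V₁'(t) = -z_x(0,t)² - m ∫_{-D}^{0} e^{-mx} z_x(x,t)² dx; in particular V₁'(t) ≤ -m V₁(t). -/
/-!
Differentiating under the integral sign, `V₁' = ∫ e^{-mx} 2 z_x z_{xt}`. The mixed partials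
commute (`z_t(x) - z_t(0) = ∫₀ˣ z_{xt}`, obtained by differentiating `z(x) - z(0) = ∫₀ˣ z_x` in
`t`), so the transport equation gives `∂ₓ z_x = -z_{xt}`. Integrating by parts against the weight
`e^{-mx}` then leaves `-m V₁` and the boundary terms, of which only `-z_x(0,t)²` survives because
`z_x(-D,t) = -z_t(-D,t) = 0` by the boundary condition.
-/

open MeasureTheory Set Function

theorem intervalIntegral.hasDerivAt_integral_of_continuous {E : Type*} [NormedAddCommGroup E]
    [NormedSpace ℝ E] {F F' : ℝ → ℝ → E} (a b t : ℝ)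
    (hF : Continuous (uncurry F)) (hF' : Continuous (uncurry F'))
    (hderiv : ∀ x τ, HasDerivAt (F x) (F' x τ) τ) :
    HasDerivAt (fun τ => ∫ x in a..b, F x τ) (∫ x in a..b, F' x t) t := by
  obtain ⟨C, hC⟩ := (isCompact_uIcc.prod (isCompact_closedBall t 1)).exists_bound_of_continuousOn
    hF'.continuousOn
  refine (intervalIntegral.hasDerivAt_integral_of_dominated_loc_of_deriv_le (bound := fun _ => C)
    (Metric.closedBall_mem_nhds t one_pos)
    (.of_forall fun τ => (hF.uncurry_right τ).aestronglyMeasurable)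
    ((hF.uncurry_right t).intervalIntegrable a b)
    (hF'.uncurry_right t).aestronglyMeasurable ?_ intervalIntegrable_const
    (.of_forall fun x _ τ _ => hderiv x τ)).2
  exact .of_forall fun x hx τ hτ => hC (x, τ) ⟨uIoc_subset_uIcc hx, hτ⟩

theorem HasDerivAt.eq_zero_of_forall_ge_eq_zero {E : Type*} [NormedAddCommGroup E]
    [NormedSpace ℝ E] {f : ℝ → E} {f' : E} {a t : ℝ} (hf : HasDerivAt f f' t)
    (hzero : ∀ s, a ≤ s → f s = 0) (ht : a ≤ t) : f' = 0 :=
  (uniqueDiffOn_Ici a t ht).eq_deriv _ hf.hasDerivWithinAt <|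
    (hasDerivWithinAt_const t _ 0).congr (fun s hs => hzero s hs) (hzero t ht)

theorem hasDerivAt_partial_comm {z zx zt zxt : ℝ → ℝ → ℝ}
    (hzx : ∀ x t, HasDerivAt (z · t) (zx x t) x) (hzt : ∀ x t, HasDerivAt (z x) (zt x t) t)
    (hzxt : ∀ x t, HasDerivAt (zx x) (zxt x t) t)
    (hzx_cont : Continuous (uncurry zx)) (hzxt_cont : Continuous (uncurry zxt)) (x t : ℝ) :
    HasDerivAt (zt · t) (zxt x t) x := by
  have hzt_eq : ∀ ξ, zt ξ t = zt 0 t + ∫ η in (0 : ℝ)..ξ, zxt η t := by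
    intro ξ
    have hftc : (fun τ => z ξ τ - z 0 τ) = fun τ => ∫ η in (0 : ℝ)..ξ, zx η τ := by
      ext τ
      rw [intervalIntegral.integral_eq_sub_of_hasDerivAt (fun η _ => hzx η τ)
        ((hzx_cont.uncurry_right τ).intervalIntegrable _ _)]
    have := ((hzt ξ t).sub (hzt 0 t)).unique (hftc ▸
      intervalIntegral.hasDerivAt_integral_of_continuous 0 ξ t hzx_cont hzxt_cont hzxt)
    linear_combination this
  rw [funext hzt_eq]
  exact ((hzxt_cont.uncurry_right t).integral_hasStrictDerivAt 0 x).hasDerivAt.const_add _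

theorem integral_exp_mul_two_mul_deriv {w w' : ℝ → ℝ} (hw : ∀ x, HasDerivAt w (w' x) x)
    (hw' : Continuous w') (m a b : ℝ) :
    ∫ x in a..b, Real.exp (-m * x) * (2 * w x * w' x) =
      Real.exp (-m * b) * w b ^ 2 - Real.exp (-m * a) * w a ^ 2 +
        m * ∫ x in a..b, Real.exp (-m * x) * w x ^ 2 := by
  have hw_cont : Continuous w := continuous_iff_continuousAt.2 fun x => (hw x).continuousAt
  have hG : ∀ x, HasDerivAt (fun ξ => Real.exp (-m * ξ) * w ξ ^ 2)
      (Real.exp (-m * x) * (2 * w x * w' x) - m * (Real.exp (-m * x) * w x ^ 2)) x := by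
    intro x
    refine ((((hasDerivAt_id' x).const_mul (-m)).exp).fun_mul ((hw x).fun_pow 2)).congr_deriv ?_
    push_cast
    ring
  have hftc := intervalIntegral.integral_eq_sub_of_hasDerivAt (fun x _ => hG x)
    (Continuous.intervalIntegrable (by fun_prop) a b)
  rw [intervalIntegral.integral_sub (Continuous.intervalIntegrable (by fun_prop) a b)
    (Continuous.intervalIntegrable (by fun_prop) a b), intervalIntegral.integral_const_mul] at hftc
  linear_combination hftc

theorem stmt_9_general (D m : ℝ)
    (z zx zt zxt : ℝ → ℝ → ℝ)
    (hzx : ∀ x t : ℝ, HasDerivAt (fun ξ => z ξ t) (zx x t) x)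
    (hzt : ∀ x t : ℝ, HasDerivAt (fun τ => z x τ) (zt x t) t)
    (hzxt : ∀ x t : ℝ, HasDerivAt (fun τ => zx x τ) (zxt x t) t)
    (hzxcont : Continuous fun p : ℝ × ℝ => zx p.1 p.2)
    (hzxtcont : Continuous fun p : ℝ × ℝ => zxt p.1 p.2)
    (hpde : ∀ x t : ℝ, zt x t = -zx x t)
    (hbc : ∀ t : ℝ, 0 ≤ t → z (-D) t = 0) :
    ∀ t : ℝ, 0 ≤ t →
      HasDerivAt (fun τ => ∫ x in (-D)..0, Real.exp (-m * x) * (zx x τ) ^ 2)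
        (-(zx 0 t) ^ 2 - m * ∫ x in (-D)..0, Real.exp (-m * x) * (zx x t) ^ 2) t ∧
      -(zx 0 t) ^ 2 - m * (∫ x in (-D)..0, Real.exp (-m * x) * (zx x t) ^ 2) ≤
        -m * ∫ x in (-D)..0, Real.exp (-m * x) * (zx x t) ^ 2 := by
  intro t ht
  have hzx_x : ∀ x, HasDerivAt (zx · t) (-zxt x t) x := fun x => by
    simpa only [hpde, neg_neg] using
      (hasDerivAt_partial_comm hzx hzt hzxt hzxcont hzxtcont x t).fun_neg
  have hzx_bc : zx (-D) t = 0 := by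
    simpa [hpde] using (hzt (-D) t).eq_zero_of_forall_ge_eq_zero hbc ht
  have hV := intervalIntegral.hasDerivAt_integral_of_continuous (-D) 0 t
    (F := fun x τ => Real.exp (-m * x) * zx x τ ^ 2)
    (F' := fun x τ => Real.exp (-m * x) * (2 * zx x τ * zxt x τ)) (by fun_prop) (by fun_prop)
    fun x τ => ((hzxt x τ).fun_pow 2).const_mul _ |>.congr_deriv (by push_cast; ring)
  have hparts := integral_exp_mul_two_mul_deriv hzx_x (by fun_prop) m (-D) 0
  simp only [mul_neg, intervalIntegral.integral_neg, hzx_bc, mul_zero, Real.exp_zero, one_mul,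
    ne_eq, OfNat.ofNat_ne_zero, not_false_eq_true, zero_pow, sub_zero] at hparts
  refine ⟨hV.congr_deriv (by linarith), ?_⟩
  linarith [sq_nonneg (zx 0 t)]

theorem stmt_9 (D m : ℝ) (hD : 0 < D) (hm : 0 < m)
    (z zx zt zxx zxt : ℝ → ℝ → ℝ)
    (hzx : ∀ x t : ℝ, HasDerivAt (fun ξ => z ξ t) (zx x t) x)
    (hzt : ∀ x t : ℝ, HasDerivAt (fun τ => z x τ) (zt x t) t)
    (hzxx : ∀ x t : ℝ, HasDerivAt (fun ξ => zx ξ t) (zxx x t) x)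
    (hzxt : ∀ x t : ℝ, HasDerivAt (fun τ => zx x τ) (zxt x t) t)
    (hzxcont : Continuous fun p : ℝ × ℝ => zx p.1 p.2)
    (hzxtcont : Continuous fun p : ℝ × ℝ => zxt p.1 p.2)
    (hpde : ∀ x t : ℝ, zt x t = -zx x t)
    (hbc : ∀ t : ℝ, 0 ≤ t → z (-D) t = 0) :
    ∀ t : ℝ, 0 ≤ t →
      HasDerivAt (fun τ => ∫ x in (-D)..0, Real.exp (-m * x) * (zx x τ) ^ 2)
        (-(zx 0 t) ^ 2 - m * ∫ x in (-D)..0, Real.exp (-m * x) * (zx x t) ^ 2) t ∧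
      -(zx 0 t) ^ 2 - m * (∫ x in (-D)..0, Real.exp (-m * x) * (zx x t) ^ 2) ≤
        -m * ∫ x in (-D)..0, Real.exp (-m * x) * (zx x t) ^ 2 :=
  stmt_9_general D m z zx zt zxt hzx hzt hzxt hzxcont hzxtcont hpde hbc
end

section
/- Let p : [0, T₁] → ℝ satisfy p(t) = e^{-t} p(0) + Δ ∫_0^t e^{-(t-s)} g(s) ds where |g(s)| ≤ M' for all s, p(0) > 0, and T₁ ≤ T̄. If |Δ| ≤ ε / (M'(e^{T̄} − 1)) for some 0 < ε < p(0), then p(t) ≥ (p(0) − ε) e^{-t} > 0 for all t ∈ [0, T₁]. -/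
/-! The perturbation term `Δ ∫₀ᵗ e^{-(t-s)} g(s) ds` is bounded by `|Δ| M' (1 - e^{-t})`, and
`1 - e^{-t} ≤ (e^{T̄} - 1) e^{-t}` for `t ≤ T̄`, so the smallness of `Δ` makes it at most
`ε e^{-t}`, which cannot overturn the decaying term `p(0) e^{-t}`. -/

open Real

theorem integral_exp_neg_sub (t : ℝ) :
    ∫ s in (0 : ℝ)..t, exp (-(t - s)) = 1 - exp (-t) := by
  have hsplit : (fun s => exp (-(t - s))) = fun s => exp (-t) * exp s := by
    funext s
    rw [← exp_add]
    ring_nf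
  rw [hsplit, intervalIntegral.integral_const_mul, integral_exp, exp_zero, mul_sub, ← exp_add,
    neg_add_cancel, exp_zero, mul_one]

theorem abs_integral_exp_neg_sub_mul_le {g : ℝ → ℝ} {t M : ℝ} (ht : 0 ≤ t)
    (hg : ∀ s ∈ Set.Ioc 0 t, |g s| ≤ M) :
    |∫ s in (0 : ℝ)..t, exp (-(t - s)) * g s| ≤ M * (1 - exp (-t)) := by
  have hbound : ∀ s ∈ Set.Ioc 0 t, ‖exp (-(t - s)) * g s‖ ≤ M * exp (-(t - s)) := by
    intro s hs
    rw [Real.norm_eq_abs, abs_mul, abs_of_pos (exp_pos _), mul_comm]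
    exact mul_le_mul_of_nonneg_right (hg s hs) (exp_pos _).le
  calc |∫ s in (0 : ℝ)..t, exp (-(t - s)) * g s|
      ≤ ∫ s in (0 : ℝ)..t, M * exp (-(t - s)) :=
        intervalIntegral.norm_integral_le_of_norm_le ht (.of_forall hbound)
          (by apply Continuous.intervalIntegrable; fun_prop)
    _ = M * (1 - exp (-t)) := by rw [intervalIntegral.integral_const_mul, integral_exp_neg_sub]

theorem one_sub_exp_neg_le {t T : ℝ} (ht : t ≤ T) : 1 - exp (-t) ≤ (exp T - 1) * exp (-t) := by
  have h : 1 ≤ exp T * exp (-t) := by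
    rw [← exp_add]
    exact one_le_exp (by linarith)
  linarith

theorem abs_mul_integral_exp_neg_sub_mul_le {g : ℝ → ℝ} {t T Δ M ε : ℝ} (ht : 0 ≤ t)
    (htT : t ≤ T) (hg : ∀ s, |g s| ≤ M) (hε : 0 ≤ ε) (hΔ : |Δ| ≤ ε / (M * (exp T - 1))) :
    |Δ * ∫ s in (0 : ℝ)..t, exp (-(t - s)) * g s| ≤ ε * exp (-t) := by
  have hM : 0 ≤ M := (abs_nonneg _).trans (hg 0)
  have hT : 0 ≤ exp T - 1 := by linarith [one_le_exp (ht.trans htT)]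
  have hΔM : |Δ| * (M * (exp T - 1)) ≤ ε := mul_le_of_le_div₀ hε (by positivity) hΔ
  calc |Δ * ∫ s in (0 : ℝ)..t, exp (-(t - s)) * g s|
      ≤ |Δ| * (M * (1 - exp (-t))) := by
        rw [abs_mul]
        exact mul_le_mul_of_nonneg_left
          (abs_integral_exp_neg_sub_mul_le ht fun s _ => hg s) (abs_nonneg _)
    _ ≤ |Δ| * (M * ((exp T - 1) * exp (-t))) := by gcongr; exact one_sub_exp_neg_le htT
    _ = |Δ| * (M * (exp T - 1)) * exp (-t) := by ring
    _ ≤ ε * exp (-t) := by gcongr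

theorem stmt_13_general (T₁ Tbar Δ M' ε : ℝ) (hTbar : T₁ ≤ Tbar)
    (p g : ℝ → ℝ)
    (hgbd : ∀ s : ℝ, |g s| ≤ M')
    (hp : ∀ t ∈ Set.Icc 0 T₁,
      p t = Real.exp (-t) * p 0 + Δ * ∫ s in (0:ℝ)..t, Real.exp (-(t - s)) * g s)
    (hε : 0 < ε) (hεp : ε < p 0)
    (hΔ : |Δ| ≤ ε / (M' * (Real.exp Tbar - 1))) :
    ∀ t ∈ Set.Icc 0 T₁, (p 0 - ε) * Real.exp (-t) ≤ p t ∧ 0 < p t := by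
  intro t ht
  have hpert := abs_le.mp <|
    abs_mul_integral_exp_neg_sub_mul_le ht.1 (ht.2.trans hTbar) hgbd hε.le hΔ
  have hlower : (p 0 - ε) * exp (-t) ≤ p t := by
    rw [hp t ht]
    linarith [hpert.1]
  exact ⟨hlower, hlower.trans_lt' (mul_pos (by linarith) (exp_pos _))⟩

theorem stmt_13 (T₁ Tbar Δ M' ε : ℝ) (hT₁ : 0 < T₁) (hTbar : T₁ ≤ Tbar)
    (p g : ℝ → ℝ) (hg : Continuous g) (hM' : 0 < M')
    (hgbd : ∀ s : ℝ, |g s| ≤ M')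
    (hp : ∀ t ∈ Set.Icc 0 T₁,
      p t = Real.exp (-t) * p 0 + Δ * ∫ s in (0:ℝ)..t, Real.exp (-(t - s)) * g s)
    (hp0 : 0 < p 0) (hε : 0 < ε) (hεp : ε < p 0)
    (hΔ : |Δ| ≤ ε / (M' * (Real.exp Tbar - 1))) :
    ∀ t ∈ Set.Icc 0 T₁, (p 0 - ε) * Real.exp (-t) ≤ p t ∧ 0 < p t :=
  stmt_13_general T₁ Tbar Δ M' ε hTbar p g hgbd hp hε hεp hΔ
end
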